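/- arXiv:1303.1646 — 4 statements merged into one kernel-verified Lean document; each statement's English description precedes it below -/
import Mathlib

section
/- Proof template, discriminatory pricing: let λ > 0 and μ ≥ 0, fix a strategy space S_i for each bidder (either all non-increasing bid vectors or all uniform bid vectors), and suppose that for every valuation profile (v_1,…,v_n) with v_i ∈ V_i, every bidder i, and every finitely supported probability distribution P_{−i} over profiles b_{−i} of bids from the strategy spaces satisfying no-overbidding, there exists a bid vector b'_i ∈ S_i satisfying no-overbidding w.r.t. v_i such that E_{b_{−i}∼P_{−i}}[u_i^{v_i}(b'_i, b_{−i})] ≥ λ·v_i(x_i^v) − μ·E_{b_{−i}∼P_{−i}}[Σ_{j=1}^{x_i^v} β_j(b_{−i})]. Then under discriminatory pricing, for every finite product prior π and every Bayes-Nash equilibrium B whose strategies place all mass on no-overbidding bid vectors, E_{v∼π}[SW(v, x^v)] ≤ (max{1, μ}/λ) · E_{v∼π} E_{b∼B^v}[SW(v, x(b))]. -/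
/-!
Fix a valuation profile `θ` and a bidder `i`. The template hypothesis, applied to the
distribution of the other bidders' equilibrium bids conditional on `i` having type `θ i`,
yields a deviation worth at least `λ·vᵢ(xᵢ^θ) - μ·E[∑_{j ≤ xᵢ^θ} βⱼ]`, so by the equilibrium
condition `i`'s interim utility is at least that much. Averaged over the prior, the interim
utilities of all bidders add up to the expected welfare `W` minus the expected payments `P`.
Removing bidder `i`'s bids only lowers the order statistics, and the `βⱼ` are non-decreasing in
`j`, so `∑ᵢ ∑_{j ≤ xᵢ^θ} βⱼ(b₋ᵢ)` is at most the sum of the `k` highest bids, which under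
discriminatory pricing is exactly the total payment. No-overbidding gives `0 ≤ P ≤ W`, hence
`λ·OPT ≤ (W - P) + μ·P ≤ max {1, μ}·W`.
-/

open Finset MeasureTheory

noncomputable section

/-- A bid vector for an auction of `k` units: entry `j` is the `(j+1)`-st marginal bid. -/
abbrev Bid (k : ℕ) := Fin k → ℝ

/-- Standard bid vectors: non-increasing and non-negative. -/
def StdBid {k : ℕ} (b : Bid k) : Prop :=
  (∀ j j' : Fin k, j ≤ j' → b j' ≤ b j) ∧ ∀ j, 0 ≤ b j

/-- Uniform bid vectors: a common value `c ≥ 0` on the first `q ≤ k` entries, `0` afterwards. -/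
def UnifBid {k : ℕ} (b : Bid k) : Prop :=
  ∃ c : ℝ, 0 ≤ c ∧ ∃ q : ℕ, q ≤ k ∧ ∀ j : Fin k, b j = if (j : ℕ) < q then c else 0

/-- A valuation on `{0,…,k}`: zero at `0`, non-negative and non-decreasing (up to `k`). -/
def IsValuation (k : ℕ) (v : ℕ → ℝ) : Prop :=
  v 0 = 0 ∧ (∀ x, 0 ≤ v x) ∧ ∀ x y : ℕ, x ≤ y → y ≤ k → v x ≤ v y

/-- Submodularity: non-increasing marginal values `v j - v (j-1)`. -/
def SubmodularVal (k : ℕ) (v : ℕ → ℝ) : Prop :=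
  ∀ x y : ℕ, 1 ≤ x → x < y → y ≤ k → v y - v (y - 1) ≤ v x - v (x - 1)

/-- Subadditivity. -/
def SubadditiveVal (k : ℕ) (v : ℕ → ℝ) : Prop :=
  ∀ x y : ℕ, x + y ≤ k → v (x + y) ≤ v x + v y

/-- `x` is a valid allocation for the bidding profile `b`:
all `k` units are allocated, and every winning bid is at least every losing bid. -/
def ValidAlloc {n k : ℕ} (b : Fin n → Bid k) (x : Fin n → ℕ) : Prop :=
  (∑ i, x i) = k ∧
  ∀ i i' : Fin n, ∀ j j' : Fin k, (j : ℕ) < x i → x i' ≤ (j' : ℕ) → b i' j' ≤ b i j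

/-- The sum of the first `x` entries of a bid vector. -/
def winSum {k : ℕ} (b : Bid k) (x : ℕ) : ℝ :=
  ∑ j : Fin k, if (j : ℕ) < x then b j else 0

/-- No-overbidding of the bid vector `b` with respect to the valuation `v`. -/
def NoOverbid {k : ℕ} (v : ℕ → ℝ) (b : Bid k) : Prop :=
  ∀ s : ℕ, 1 ≤ s → s ≤ k → winSum b s ≤ v s

/-- The `j`-th highest element of a multiset of reals (`j` is 1-indexed; default `0`). -/
def kthHighest (s : Multiset ℝ) (j : ℕ) : ℝ :=
  ((s.sort (· ≤ ·)).reverse).getD (j - 1) 0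

/-- The multiset of all bids submitted under the profile `b`. -/
def allBids {n k : ℕ} (b : Fin n → Bid k) : Multiset ℝ :=
  (Finset.univ : Finset (Fin n × Fin k)).val.map fun p => b p.1 p.2

/-- The multiset of all bids submitted by the bidders other than `i`. -/
def othersBids {n k : ℕ} (b : Fin n → Bid k) (i : Fin n) : Multiset ℝ :=
  ((Finset.univ : Finset (Fin n × Fin k)).filter (fun p => p.1 ≠ i)).val.map
    fun p => b p.1 p.2

/-- `β_j` (1-indexed): the `j`-th lowest among the `k` highest elements of `s`,
i.e. the `(k+1-j)`-th highest element of `s`. -/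
def betaBid (k : ℕ) (s : Multiset ℝ) (j : ℕ) : ℝ := kthHighest s (k + 1 - j)

/-- `∑_{j=1}^{x} β_j(s)`. -/
def betaSum (k : ℕ) (s : Multiset ℝ) (x : ℕ) : ℝ := ∑ j ∈ Finset.Icc 1 x, betaBid k s j

/-- The uniform price: the `(k+1)`-st highest of all submitted bids (`0` by default). -/
def price {n k : ℕ} (b : Fin n → Bid k) : ℝ := kthHighest (allBids b) (k + 1)

/-- Discriminatory-pricing utility of bidder `i` under the allocation rule `X`. -/
def uDisc {n k : ℕ} (X : (Fin n → Bid k) → Fin n → ℕ) (v : ℕ → ℝ) (i : Fin n)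
    (b : Fin n → Bid k) : ℝ :=
  v (X b i) - winSum (b i) (X b i)

/-- Uniform-pricing utility of bidder `i` under the allocation rule `X`. -/
def uUnif {n k : ℕ} (X : (Fin n → Bid k) → Fin n → ℕ) (v : ℕ → ℝ) (i : Fin n)
    (b : Fin n → Bid k) : ℝ :=
  v (X b i) - (X b i : ℝ) * price b

/-- The `x`-th entry (1-indexed) of a bid vector, with the convention that it is `0`
for `x = 0` (or `x > k`). -/
def lastWinBid {k : ℕ} (b : Bid k) (x : ℕ) : ℝ :=
  if h : 1 ≤ x ∧ x ≤ k then b ⟨x - 1, by omega⟩ else 0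

/-- Social welfare of the allocation `x` under the valuation profile `v`. -/
def SW {n : ℕ} (v : Fin n → ℕ → ℝ) (x : Fin n → ℕ) : ℝ := ∑ i, v i (x i)

theorem reverse_sort_le_eq_sort_ge (s : Multiset ℝ) : (s.sort (· ≤ ·)).reverse = s.sort (· ≥ ·) :=
  List.Perm.eq_of_pairwise' (r := (· ≥ ·))
    (by simp [List.pairwise_reverse])
    (Multiset.pairwise_sort s _) (by rw [← Multiset.coe_eq_coe]; simp)

theorem kthHighest_eq_getD (s : Multiset ℝ) (j : ℕ) :
    kthHighest s j = (s.sort (· ≥ ·)).getD (j - 1) 0 := by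
  rw [kthHighest, reverse_sort_le_eq_sort_ge]

theorem List.getD_nonneg {l : List ℝ} (h0 : ∀ x ∈ l, 0 ≤ x) (m : ℕ) : 0 ≤ l.getD m 0 := by
  rw [List.getD_eq_getElem?_getD]
  cases h : l[m]? with
  | none => exact le_rfl
  | some x => exact h0 x (List.mem_of_getElem? h)

theorem List.Pairwise.getD_antitone {l : List ℝ} (hl : l.Pairwise (· ≥ ·))
    (h0 : ∀ x ∈ l, 0 ≤ x) : Antitone (l.getD · 0) := by
  intro m m' hmm'
  by_cases hm' : m' < l.length
  · have hm : m < l.length := lt_of_le_of_lt hmm' hm'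
    simp only [List.getD_eq_getElem _ _ hm, List.getD_eq_getElem _ _ hm']
    rcases hmm'.eq_or_lt with rfl | hlt
    · exact le_rfl
    · exact List.pairwise_iff_getElem.1 hl m m' hm hm' hlt
  · show l.getD m' 0 ≤ l.getD m 0
    rw [List.getD_eq_default _ _ (not_lt.1 hm')]
    exact List.getD_nonneg h0 m

theorem List.Sublist.getD_le_getD {l l' : List ℝ} (hsub : l.Sublist l') (hl' : l'.Pairwise (· ≥ ·))
    (h0 : ∀ x ∈ l', 0 ≤ x) (m : ℕ) : l.getD m 0 ≤ l'.getD m 0 := by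
  obtain ⟨f, hf⟩ := List.sublist_iff_exists_orderEmbedding_getElem?_eq.1 hsub
  rw [List.getD_eq_getElem?_getD]
  cases h : l[m]? with
  | none => exact List.getD_nonneg h0 m
  | some x =>
    have hx : l'.getD (f m) 0 = x := by rw [List.getD_eq_getElem?_getD, ← hf, h]; rfl
    exact hx ▸ hl'.getD_antitone h0 (f.strictMono.id_le m)

theorem kthHighest_antitone {s : Multiset ℝ} (h0 : ∀ x ∈ s, 0 ≤ x) : Antitone (kthHighest s) :=
  fun j j' h => by
    simp only [kthHighest_eq_getD]
    exact (Multiset.pairwise_sort s _).getD_antitone (by simpa using h0) (Nat.sub_le_sub_right h 1)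

theorem kthHighest_mono {s t : Multiset ℝ} (hst : s ≤ t) (h0 : ∀ x ∈ t, 0 ≤ x) (j : ℕ) :
    kthHighest s j ≤ kthHighest t j := by
  have hsub : (s.sort (· ≥ ·)).Sublist (t.sort (· ≥ ·)) :=
    List.sublist_of_subperm_of_pairwise
      (by rwa [← Multiset.coe_le, Multiset.sort_eq, Multiset.sort_eq])
      (Multiset.pairwise_sort s _) (Multiset.pairwise_sort t _)
  simp only [kthHighest_eq_getD]
  exact hsub.getD_le_getD (Multiset.pairwise_sort t _) (by simpa using h0) _

theorem sort_ge_add_of_forall_le {W L : Multiset ℝ} (hWL : ∀ w ∈ W, ∀ l ∈ L, l ≤ w) :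
    (W + L).sort (· ≥ ·) = W.sort (· ≥ ·) ++ L.sort (· ≥ ·) :=
  List.Perm.eq_of_pairwise' (r := (· ≥ ·)) (Multiset.pairwise_sort _ _)
    (List.pairwise_append.2 ⟨Multiset.pairwise_sort _ _, Multiset.pairwise_sort _ _,
      fun w hw l hl => hWL w (by simpa using hw) l (by simpa using hl)⟩)
    (by rw [← Multiset.coe_eq_coe, ← Multiset.coe_add]; simp)

theorem sum_range_getD_append (l₁ l₂ : List ℝ) :
    ∑ m ∈ range l₁.length, (l₁ ++ l₂).getD m 0 = l₁.sum := by
  induction l₁ with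
  | nil => simp
  | cons a l ih =>
    simp only [List.cons_append, List.length_cons, Finset.sum_range_succ', List.getD_cons_succ,
      List.getD_cons_zero, ih, List.sum_cons, add_comm]

theorem betaSum_eq_sum_range (k : ℕ) (s : Multiset ℝ) (x : ℕ) :
    betaSum k s x = ∑ j ∈ range x, kthHighest s (k - j) := by
  induction x with
  | zero => simp [betaSum]
  | succ x ih =>
    rw [betaSum, Finset.sum_Icc_succ_top (by omega), ← betaSum, ih, Finset.sum_range_succ, betaBid]
    congr 2
    omega

theorem betaSum_self (k : ℕ) (s : Multiset ℝ) :
    betaSum k s k = ∑ m ∈ range k, (s.sort (· ≥ ·)).getD m 0 := by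
  rw [betaSum_eq_sum_range, ← Finset.sum_range_reflect]
  refine Finset.sum_congr rfl fun j hj => ?_
  rw [kthHighest_eq_getD]
  congr 1
  have := Finset.mem_range.1 hj
  omega

theorem betaSum_add_of_forall_le {k : ℕ} {W L : Multiset ℝ} (hW : Multiset.card W = k)
    (hWL : ∀ w ∈ W, ∀ l ∈ L, l ≤ w) : betaSum k (W + L) k = W.sum := by
  rw [betaSum_self, sort_ge_add_of_forall_le hWL, ← hW, ← Multiset.length_sort (· ≥ ·),
    sum_range_getD_append, ← Multiset.sum_coe, Multiset.sort_eq]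

theorem betaSum_mono {s t : Multiset ℝ} (hst : s ≤ t) (h0 : ∀ x ∈ t, 0 ≤ x) (k x : ℕ) :
    betaSum k s x ≤ betaSum k t x :=
  Finset.sum_le_sum fun _ _ => kthHighest_mono hst h0 _

theorem betaSum_add_le {s : Multiset ℝ} (h0 : ∀ x ∈ s, 0 ≤ x) (k x y : ℕ) :
    betaSum k s x + betaSum k s y ≤ betaSum k s (x + y) := by
  simp only [betaSum_eq_sum_range, Finset.sum_range_add]
  gcongr with j
  exact kthHighest_antitone h0 (by omega)

theorem sum_betaSum_le {ι : Type*} {s : Multiset ℝ} (h0 : ∀ x ∈ s, 0 ≤ x) (k : ℕ)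
    (I : Finset ι) (x : ι → ℕ) : ∑ i ∈ I, betaSum k s (x i) ≤ betaSum k s (∑ i ∈ I, x i) := by
  simpa using Finset.le_sum_of_subadditive (fun m => -betaSum k s m) (by simp [betaSum])
    (fun a b => by linarith [betaSum_add_le h0 k a b]) I x

section Auction

variable {n k : ℕ}

theorem ValidAlloc.le {b : Fin n → Bid k} {x : Fin n → ℕ} (hx : ValidAlloc b x) (i : Fin n) :
    x i ≤ k :=
  hx.1 ▸ Finset.single_le_sum (fun _ _ => Nat.zero_le _) (Finset.mem_univ i)

theorem allBids_nonneg {b : Fin n → Bid k} (hb : ∀ i j, 0 ≤ b i j) : ∀ y ∈ allBids b, 0 ≤ y := by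
  simp only [allBids, Multiset.mem_map]
  rintro _ ⟨p, -, rfl⟩
  exact hb p.1 p.2

theorem othersBids_le_allBids (b : Fin n → Bid k) (i : Fin n) : othersBids b i ≤ allBids b :=
  Multiset.map_le_map (Multiset.filter_le _ _)

theorem othersBids_congr {b b' : Fin n → Bid k} {i : Fin n} (h : ∀ j ≠ i, b j = b' j) :
    othersBids b i = othersBids b' i :=
  Multiset.map_congr rfl fun p hp => by
    rw [h p.1 (Finset.mem_filter.1 hp).2]

theorem betaSum_allBids_eq_sum_winSum {b : Fin n → Bid k} {x : Fin n → ℕ}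
    (hx : ValidAlloc b x) : betaSum k (allBids b) k = ∑ i, winSum (b i) (x i) := by
  classical
  let won : Fin n × Fin k → Prop := fun p => (p.2 : ℕ) < x p.1
  let bid : Fin n × Fin k → ℝ := fun p => b p.1 p.2
  have hsplit : allBids b = (univ.filter won).val.map bid + (univ.filter (¬won ·)).val.map bid := by
    rw [allBids, Finset.filter_val, Finset.filter_val, ← Multiset.map_add,
      Multiset.filter_add_not]
  have hcard : Multiset.card ((univ.filter won).val.map bid) = k := by
    rw [Multiset.card_map, ← Finset.card_def, Finset.card_filter, Fintype.sum_prod_type]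
    refine (Finset.sum_congr rfl fun i _ => ?_).trans hx.1
    rw [← Finset.card_filter]
    exact Fin.card_filter_val_lt.trans (min_eq_right (hx.le i))
  rw [hsplit, betaSum_add_of_forall_le hcard]
  · change ∑ p ∈ univ.filter won, bid p = _
    rw [Finset.sum_filter, Fintype.sum_prod_type]
    rfl
  · simp only [Multiset.mem_map, Finset.mem_val, Finset.mem_filter]
    rintro _ ⟨p, ⟨-, hp⟩, rfl⟩ _ ⟨p', ⟨-, hp'⟩, rfl⟩
    exact hx.2 p.1 p'.1 p.2 p'.2 hp (not_lt.1 hp')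

theorem sum_betaSum_othersBids_le {b : Fin n → Bid k} (hb : ∀ i j, 0 ≤ b i j) {x xo : Fin n → ℕ}
    (hx : ValidAlloc b x) (hxo : ∑ i, xo i = k) :
    ∑ i, betaSum k (othersBids b i) (xo i) ≤ ∑ i, winSum (b i) (x i) :=
  calc ∑ i, betaSum k (othersBids b i) (xo i)
      ≤ ∑ i, betaSum k (allBids b) (xo i) :=
        Finset.sum_le_sum fun i _ =>
          betaSum_mono (othersBids_le_allBids b i) (allBids_nonneg hb) k _
    _ ≤ betaSum k (allBids b) k := hxo ▸ sum_betaSum_le (allBids_nonneg hb) k univ xo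
    _ = ∑ i, winSum (b i) (x i) := betaSum_allBids_eq_sum_winSum hx

theorem winSum_nonneg {b : Bid k} (hb : ∀ j, 0 ≤ b j) (m : ℕ) : 0 ≤ winSum b m :=
  Finset.sum_nonneg fun j _ => by split_ifs <;> simp [hb j]

theorem winSum_le_of_noOverbid {v : ℕ → ℝ} (hv : IsValuation k v) {b : Bid k}
    (hb : NoOverbid v b) {m : ℕ} (hm : m ≤ k) : winSum b m ≤ v m := by
  rcases Nat.eq_zero_or_pos m with rfl | hm0
  · simp [winSum, hv.1]
  · exact hb m hm0 hm

theorem sum_winSum_le_SW {v : Fin n → ℕ → ℝ} (hv : ∀ i, IsValuation k (v i))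
    {b : Fin n → Bid k} (hb : ∀ i, NoOverbid (v i) (b i)) {x : Fin n → ℕ}
    (hx : ValidAlloc b x) : ∑ i, winSum (b i) (x i) ≤ SW v x :=
  Finset.sum_le_sum fun i _ => winSum_le_of_noOverbid (hv i) (hb i) (hx.le i)

theorem StdBid.nonneg {b : Bid k} (hb : StdBid b) (j : Fin k) : 0 ≤ b j := hb.2 j

theorem UnifBid.nonneg {b : Bid k} (hb : UnifBid b) (j : Fin k) : 0 ≤ b j := by
  obtain ⟨c, hc, q, -, hbq⟩ := hb
  rw [hbq j]
  split_ifs <;> simp [hc]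

end Auction

theorem pos_of_prod_pos {ι : Type*} [Fintype ι] {f : ι → ℝ} (h0 : ∀ j, 0 ≤ f j)
    (h : 0 < ∏ j, f j) (j : ι) : 0 < f j :=
  (h0 j).lt_of_ne fun hj => h.ne' (Finset.prod_eq_zero (Finset.mem_univ j) hj.symm)

section ProductWeights

variable {ι : Type*} [Fintype ι] [DecidableEq ι] {α : ι → Type*}

theorem prod_erase_update (p : ∀ j, α j → ℝ) (σ : ∀ j, α j) (i : ι) (a : α i) :
    ∏ j ∈ univ.erase i, p j (Function.update σ i a j) = ∏ j ∈ univ.erase i, p j (σ j) :=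
  Finset.prod_congr rfl fun j hj => by rw [Function.update_of_ne (Finset.ne_of_mem_erase hj)]

theorem prod_update_eq_mul_prod_erase (p : ∀ j, α j → ℝ) (σ : ∀ j, α j) (i : ι) (a : α i) :
    ∏ j, p j (Function.update σ i a j) = p i a * ∏ j ∈ univ.erase i, p j (σ j) := by
  rw [← Finset.mul_prod_erase _ _ (Finset.mem_univ i), Function.update_self,
    prod_erase_update]

theorem prod_eq_mul_prod_erase (p : ∀ j, α j → ℝ) (σ : ∀ j, α j) (i : ι) :
    ∏ j, p j (σ j) = p i (σ i) * ∏ j ∈ univ.erase i, p j (σ j) := by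
  simpa using prod_update_eq_mul_prod_erase p σ i (σ i)

variable [∀ j, Fintype (α j)]

theorem sum_prod_eq_one {p : ∀ j, α j → ℝ} (hp : ∀ j, ∑ a, p j a = 1) :
    ∑ σ : ∀ j, α j, ∏ j, p j (σ j) = 1 := by
  rw [← Fintype.prod_sum, Finset.prod_eq_one fun j _ => hp j]

theorem sum_sum_update_comm (i : ι) (G : α i → (∀ j, α j) → ℝ) :
    ∑ a, ∑ σ : ∀ j, α j, G a σ = ∑ a, ∑ σ : ∀ j, α j, G (σ i) (Function.update σ i a) := by
  let swap : α i × (∀ j, α j) → α i × (∀ j, α j) := fun x => (x.2 i, Function.update x.2 i x.1)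
  have hswap : Function.Involutive swap := fun x => by simp [swap]
  rw [← Fintype.sum_prod_type', ← Fintype.sum_prod_type']
  exact (Equiv.sum_comp hswap.toPerm (fun x => G x.1 x.2)).symm

theorem sum_mul_sum_eval_mul_comm (i : ι) (g₁ g₂ : α i → ℝ) {Q : (∀ j, α j) → ℝ}
    (hQ : ∀ σ a, Q (Function.update σ i a) = Q σ) :
    (∑ a, g₁ a) * ∑ σ : ∀ j, α j, g₂ (σ i) * Q σ
      = (∑ a, g₂ a) * ∑ σ : ∀ j, α j, g₁ (σ i) * Q σ := by
  simp only [Finset.sum_mul_sum]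
  rw [sum_sum_update_comm i]
  refine Finset.sum_congr rfl fun a _ => Finset.sum_congr rfl fun σ _ => ?_
  rw [Function.update_self, hQ]
  ring

theorem sum_prod_mul_eq_of_update_invariant {p q : ∀ j, α j → ℝ} {i : ι}
    (hpq : ∀ j ≠ i, p j = q j) (hp : ∑ a, p i a = 1) (hq : ∑ a, q i a = 1)
    {F : (∀ j, α j) → ℝ} (hF : ∀ σ a, F (Function.update σ i a) = F σ) :
    ∑ σ : ∀ j, α j, (∏ j, p j (σ j)) * F σ = ∑ σ : ∀ j, α j, (∏ j, q j (σ j)) * F σ := by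
  let R : (∀ j, α j) → ℝ := fun σ => (∏ j ∈ univ.erase i, p j (σ j)) * F σ
  have hR : ∀ σ a, R (Function.update σ i a) = R σ := fun σ a => by
    simp only [R, hF, prod_erase_update]
  have hqR : ∀ σ, (∏ j, q j (σ j)) * F σ = q i (σ i) * R σ := fun σ => by
    rw [prod_eq_mul_prod_erase, mul_assoc]
    congr 2
    exact Finset.prod_congr rfl fun j hj => by rw [hpq j (Finset.ne_of_mem_erase hj)]
  have := sum_mul_sum_eval_mul_comm i (q i) (p i) hR
  simp only [hp, hq, one_mul] at this
  simp only [hqR, prod_eq_mul_prod_erase p _ i, mul_assoc]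
  exact this

theorem sum_mul_sum_prod_mul_update {p : ∀ j, α j → ℝ} {i : ι} (hp : ∑ a, p i a = 1)
    (F : (∀ j, α j) → ℝ) :
    ∑ a, p i a * ∑ σ : ∀ j, α j, (∏ j, p j (σ j)) * F (Function.update σ i a)
      = ∑ σ : ∀ j, α j, (∏ j, p j (σ j)) * F σ := by
  simp only [Finset.mul_sum]
  rw [sum_sum_update_comm i, Finset.sum_comm]
  refine Finset.sum_congr rfl fun σ _ => ?_
  simp only [prod_update_eq_mul_prod_erase, Function.update_idem, Function.update_eq_self]
  rw [prod_eq_mul_prod_erase p σ i, ← Finset.mul_sum, ← Finset.sum_mul, ← Finset.sum_mul, hp]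
  ring

theorem sum_prod_mul_eval {p : ∀ j, α j → ℝ} (hp : ∀ j, ∑ a, p j a = 1) (i : ι) (g : α i → ℝ) :
    ∑ σ : ∀ j, α j, (∏ j, p j (σ j)) * g (σ i) = ∑ a, p i a * g a := by
  rw [← sum_mul_sum_prod_mul_update (hp i)]
  simp [← Finset.sum_mul, sum_prod_eq_one hp]

theorem sum_prod_mul_sum_prod_mul_update {p : ∀ j, α j → ℝ} (hp : ∀ j, ∑ a, p j a = 1) (i : ι)
    (F : (∀ j, α j) → ℝ) :
    ∑ θ : ∀ j, α j, (∏ j, p j (θ j)) *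
        ∑ σ : ∀ j, α j, (∏ j, p j (σ j)) * F (Function.update σ i (θ i))
      = ∑ σ : ∀ j, α j, (∏ j, p j (σ j)) * F σ := by
  rw [sum_prod_mul_eval hp i
    (fun a => ∑ σ : ∀ j, α j, (∏ j, p j (σ j)) * F (Function.update σ i a)),
    sum_mul_sum_prod_mul_update (hp i)]

end ProductWeights

section BayesExpect

variable {ι : Type*} [Fintype ι] [DecidableEq ι] {T O : ι → Type*}
  {pr : ∀ i, T i → ℝ} {wt : ∀ i, T i → O i → ℝ}

variable (pr wt) in
/-- The entry `x.1 i` is a dummy, summed out against `pr i`: as a distribution of `x`, this is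
the law of the other bidders' types and of all bids given that bidder `i` has type `t`. -/
def interimWeight (i : ι) (t : T i) (x : (∀ j, T j) × (∀ j, O j)) : ℝ :=
  (∏ j, pr j (x.1 j)) * ∏ j, wt j (Function.update x.1 i t j) (x.2 j)

theorem interimWeight_nonneg (hpr0 : ∀ i t, 0 ≤ pr i t) (hwt0 : ∀ i t ω, 0 ≤ wt i t ω)
    (i : ι) (t : T i) (x : (∀ j, T j) × (∀ j, O j)) : 0 ≤ interimWeight pr wt i t x :=
  mul_nonneg (Finset.prod_nonneg fun j _ => hpr0 j _) (Finset.prod_nonneg fun j _ => hwt0 j _ _)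

theorem pos_of_interimWeight_pos (hpr0 : ∀ i t, 0 ≤ pr i t) (hwt0 : ∀ i t ω, 0 ≤ wt i t ω)
    {i : ι} {t : T i} {x : (∀ j, T j) × (∀ j, O j)} (hx : 0 < interimWeight pr wt i t x)
    {j : ι} (hj : j ≠ i) : 0 < wt j (x.1 j) (x.2 j) := by
  have := pos_of_prod_pos (fun j => hwt0 j _ _)
    (pos_of_mul_pos_right hx (Finset.prod_nonneg fun j _ => hpr0 j _)) j
  rwa [Function.update_of_ne hj] at this

variable [∀ i, Fintype (T i)] [∀ i, Fintype (O i)]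

variable (pr wt) in
def bayesExpect (f : (∀ j, T j) → (∀ j, O j) → ℝ) : ℝ :=
  ∑ θ, ∑ ω, ((∏ j, pr j (θ j)) * ∏ j, wt j (θ j) (ω j)) * f θ ω

theorem bayesExpect_sub (f g : (∀ j, T j) → (∀ j, O j) → ℝ) :
    bayesExpect pr wt (fun θ ω => f θ ω - g θ ω) = bayesExpect pr wt f - bayesExpect pr wt g := by
  simp only [bayesExpect, mul_sub, Finset.sum_sub_distrib]

theorem sum_bayesExpect {κ : Type*} (s : Finset κ) (f : κ → (∀ j, T j) → (∀ j, O j) → ℝ) :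
    ∑ i ∈ s, bayesExpect pr wt (f i) = bayesExpect pr wt (fun θ ω => ∑ i ∈ s, f i θ ω) := by
  simp only [bayesExpect, Finset.mul_sum]
  rw [Finset.sum_comm]
  exact Finset.sum_congr rfl fun θ _ => Finset.sum_comm

theorem bayesExpect_mono (hpr0 : ∀ i t, 0 ≤ pr i t) (hwt0 : ∀ i t ω, 0 ≤ wt i t ω)
    {f g : (∀ j, T j) → (∀ j, O j) → ℝ}
    (hfg : ∀ θ ω, 0 < ∏ j, wt j (θ j) (ω j) → f θ ω ≤ g θ ω) :
    bayesExpect pr wt f ≤ bayesExpect pr wt g := by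
  refine Finset.sum_le_sum fun θ _ => Finset.sum_le_sum fun ω _ => ?_
  have hW : 0 ≤ ∏ j, wt j (θ j) (ω j) := Finset.prod_nonneg fun j _ => hwt0 j _ _
  rcases hW.eq_or_lt with hW0 | hWpos
  · simp [← hW0]
  · exact mul_le_mul_of_nonneg_left (hfg θ ω hWpos)
      (mul_nonneg (Finset.prod_nonneg fun j _ => hpr0 j _) hW)

theorem bayesExpect_nonneg (hpr0 : ∀ i t, 0 ≤ pr i t) (hwt0 : ∀ i t ω, 0 ≤ wt i t ω)
    {f : (∀ j, T j) → (∀ j, O j) → ℝ} (hf : ∀ θ ω, 0 < ∏ j, wt j (θ j) (ω j) → 0 ≤ f θ ω) :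
    0 ≤ bayesExpect pr wt f := by
  simpa [bayesExpect] using bayesExpect_mono hpr0 hwt0 (f := 0) hf

theorem sum_prod_mul_interim_eq_bayesExpect (hpr1 : ∀ i, ∑ t, pr i t = 1) (i : ι)
    (f : T i → (∀ j, T j) → (∀ j, O j) → ℝ) :
    ∑ θ : ∀ j, T j, (∏ j, pr j (θ j)) * ∑ σ, ∑ ω,
        ((∏ j, pr j (σ j)) * ∏ j, wt j (Function.update σ i (θ i) j) (ω j)) *
          f (θ i) (Function.update σ i (θ i)) ω
      = bayesExpect pr wt (fun θ ω => f (θ i) θ ω) := by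
  let F : (∀ j, T j) → ℝ := fun τ => ∑ ω, (∏ j, wt j (τ j) (ω j)) * f (τ i) τ ω
  have hinner : ∀ θ : ∀ j, T j, ∑ σ, ∑ ω,
      ((∏ j, pr j (σ j)) * ∏ j, wt j (Function.update σ i (θ i) j) (ω j)) *
        f (θ i) (Function.update σ i (θ i)) ω
        = ∑ σ, (∏ j, pr j (σ j)) * F (Function.update σ i (θ i)) := fun θ => by
    simp only [F, Function.update_self, Finset.mul_sum, mul_assoc]
  calc _ = ∑ θ : ∀ j, T j, (∏ j, pr j (θ j)) *
          ∑ σ, (∏ j, pr j (σ j)) * F (Function.update σ i (θ i)) := by simp only [hinner]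
    _ = ∑ σ, (∏ j, pr j (σ j)) * F σ := sum_prod_mul_sum_prod_mul_update hpr1 i F
    _ = _ := by simp only [bayesExpect, F, Finset.mul_sum, mul_assoc]

theorem sum_interimWeight (hpr1 : ∀ i, ∑ t, pr i t = 1) (hwt1 : ∀ i t, ∑ ω, wt i t ω = 1)
    (i : ι) (t : T i) : ∑ x, interimWeight pr wt i t x = 1 := by
  simp only [interimWeight, Fintype.sum_prod_type, ← Finset.mul_sum,
    sum_prod_eq_one fun j => hwt1 j _, mul_one, sum_prod_eq_one hpr1]

theorem sum_interimWeight_mul_of_update_invariant (hwt1 : ∀ i t, ∑ ω, wt i t ω = 1) (i : ι)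
    (t : T i) {G : (∀ j, T j) → (∀ j, O j) → ℝ}
    (hGT : ∀ σ s ω, G (Function.update σ i s) ω = G σ ω)
    (hGO : ∀ σ ω a, G σ (Function.update ω i a) = G σ ω) :
    ∑ x, interimWeight pr wt i t x * G (Function.update x.1 i t) x.2 = bayesExpect pr wt G := by
  rw [Fintype.sum_prod_type]
  refine Finset.sum_congr rfl fun σ _ => ?_
  simp only [interimWeight, hGT, mul_assoc, ← Finset.mul_sum]
  congr 1
  exact sum_prod_mul_eq_of_update_invariant
    (fun j hj => by simp only [Function.update_of_ne hj]) (hwt1 i _) (hwt1 i _) (hGO σ)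

end BayesExpect

theorem sub_add_mul_le_max_one_mul {w p μ : ℝ} (hp : 0 ≤ p) (hpw : p ≤ w) :
    w - p + μ * p ≤ max 1 μ * w := by
  rcases le_total μ 1 with hμ | hμ
  · rw [max_eq_left hμ]
    nlinarith
  · rw [max_eq_right hμ]
    nlinarith

section BayesianAuction

variable {n k : ℕ} {T O : Fin n → Type} [∀ i, Fintype (T i)] [∀ i, Fintype (O i)]
  (pr : ∀ i, T i → ℝ) (wt : ∀ i, T i → O i → ℝ) (val : ∀ i, T i → ℕ → ℝ)
  (B : ∀ i, T i → O i → Bid k) (X : (Fin n → Bid k) → Fin n → ℕ)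

def interimUtility (i : Fin n) (t : T i) : ℝ :=
  ∑ σ : ∀ j, T j, ∑ ω : ∀ j, O j,
    ((∏ j, pr j (σ j)) * ∏ j, wt j (Function.update σ i t j) (ω j)) *
      uDisc X (val i t) i (fun j => B j (Function.update σ i t j) (ω j))

def payment (θ : ∀ j, T j) (ω : ∀ j, O j) : ℝ :=
  ∑ i, winSum (B i (θ i) (ω i)) (X (fun j => B j (θ j) (ω j)) i)

def welfare (θ : ∀ j, T j) (ω : ∀ j, O j) : ℝ :=
  SW (fun i => val i (θ i)) (X (fun j => B j (θ j) (ω j)))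

variable {pr wt val B X}

theorem sum_prod_mul_sum_interimUtility (hpr1 : ∀ i, ∑ t, pr i t = 1) :
    ∑ θ : ∀ j, T j, (∏ j, pr j (θ j)) * ∑ i, interimUtility pr wt val B X i (θ i)
      = bayesExpect pr wt (welfare val B X) - bayesExpect pr wt (payment B X) := by
  calc _ = ∑ i, ∑ θ : ∀ j, T j, (∏ j, pr j (θ j)) * interimUtility pr wt val B X i (θ i) := by
        simp only [Finset.mul_sum]; exact Finset.sum_comm
    _ = ∑ i, bayesExpect pr wt (fun θ ω => uDisc X (val i (θ i)) i fun j => B j (θ j) (ω j)) :=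
        Finset.sum_congr rfl fun i _ =>
          sum_prod_mul_interim_eq_bayesExpect hpr1 i
            (fun t τ ω => uDisc X (val i t) i fun j => B j (τ j) (ω j))
    _ = _ := by
        rw [sum_bayesExpect, ← bayesExpect_sub]
        simp only [uDisc, welfare, SW, payment, Finset.sum_sub_distrib]

theorem sum_interimWeight_mul_betaSum_othersBids (hwt1 : ∀ i t, ∑ ω, wt i t ω = 1) (i : Fin n)
    (t : T i) (m : ℕ) :
    ∑ x, interimWeight pr wt i t x *
        betaSum k (othersBids (fun j => B j (Function.update x.1 i t j) (x.2 j)) i) m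
      = bayesExpect pr wt (fun θ ω => betaSum k (othersBids (fun j => B j (θ j) (ω j)) i) m) :=
  sum_interimWeight_mul_of_update_invariant hwt1 i t
    (G := fun θ ω => betaSum k (othersBids (fun j => B j (θ j) (ω j)) i) m)
    (fun σ s ω => congrArg (betaSum k · m)
      (othersBids_congr fun j hj => by simp only [Function.update_of_ne hj]))
    (fun σ ω a => congrArg (betaSum k · m)
      (othersBids_congr fun j hj => by simp only [Function.update_of_ne hj]))

theorem sum_bayesExpect_betaSum_le_payment (hpr0 : ∀ i t, 0 ≤ pr i t)
    (hwt0 : ∀ i t ω, 0 ≤ wt i t ω)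
    (hB0 : ∀ (θ : ∀ j, T j) (ω : ∀ j, O j), 0 < ∏ j, wt j (θ j) (ω j) →
      ∀ i m, 0 ≤ B i (θ i) (ω i) m)
    (hX : ∀ b, ValidAlloc b (X b)) {xo : Fin n → ℕ} (hxo : ∑ i, xo i = k) :
    ∑ i, bayesExpect pr wt (fun θ ω => betaSum k (othersBids (fun j => B j (θ j) (ω j)) i) (xo i))
      ≤ bayesExpect pr wt (payment B X) := by
  rw [sum_bayesExpect]
  exact bayesExpect_mono hpr0 hwt0 fun θ ω h =>
    sum_betaSum_othersBids_le (hB0 θ ω h) (hX _) hxo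

theorem bayesExpect_payment_nonneg (hpr0 : ∀ i t, 0 ≤ pr i t) (hwt0 : ∀ i t ω, 0 ≤ wt i t ω)
    (hB0 : ∀ (θ : ∀ j, T j) (ω : ∀ j, O j), 0 < ∏ j, wt j (θ j) (ω j) →
      ∀ i m, 0 ≤ B i (θ i) (ω i) m) :
    0 ≤ bayesExpect pr wt (payment B X) :=
  bayesExpect_nonneg hpr0 hwt0 fun θ ω h =>
    Finset.sum_nonneg fun i _ => winSum_nonneg (hB0 θ ω h i) _

theorem bayesExpect_payment_le_welfare (hpr0 : ∀ i t, 0 ≤ pr i t)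
    (hwt0 : ∀ i t ω, 0 ≤ wt i t ω) (hval : ∀ i t, IsValuation k (val i t))
    (hBno : ∀ (θ : ∀ j, T j) (ω : ∀ j, O j), 0 < ∏ j, wt j (θ j) (ω j) →
      ∀ i, NoOverbid (val i (θ i)) (B i (θ i) (ω i)))
    (hX : ∀ b, ValidAlloc b (X b)) :
    bayesExpect pr wt (payment B X) ≤ bayesExpect pr wt (welfare val B X) :=
  bayesExpect_mono hpr0 hwt0 fun θ ω h =>
    sum_winSum_le_SW (fun i => hval i _) (hBno θ ω h) (hX _)

theorem mul_expected_optimum_le_of_interim_bound {lam mu : ℝ} (hmu : 0 ≤ mu)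
    (hpr0 : ∀ i t, 0 ≤ pr i t) (hpr1 : ∀ i, ∑ t, pr i t = 1) (hwt0 : ∀ i t ω, 0 ≤ wt i t ω)
    (hval : ∀ i t, IsValuation k (val i t)) (hX : ∀ b, ValidAlloc b (X b))
    (hB0 : ∀ (θ : ∀ j, T j) (ω : ∀ j, O j), 0 < ∏ j, wt j (θ j) (ω j) →
      ∀ i m, 0 ≤ B i (θ i) (ω i) m)
    (hBno : ∀ (θ : ∀ j, T j) (ω : ∀ j, O j), 0 < ∏ j, wt j (θ j) (ω j) →
      ∀ i, NoOverbid (val i (θ i)) (B i (θ i) (ω i)))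
    {xopt : (∀ j, T j) → Fin n → ℕ} (hxoptk : ∀ θ, ∑ i, xopt θ i = k)
    (hdev : ∀ θ i, lam * val i (θ i) (xopt θ i)
      - mu * bayesExpect pr wt (fun σ ω => betaSum k (othersBids (fun j => B j (σ j) (ω j)) i)
          (xopt θ i))
      ≤ interimUtility pr wt val B X i (θ i)) :
    lam * ∑ θ : ∀ j, T j, (∏ j, pr j (θ j)) * SW (fun i => val i (θ i)) (xopt θ)
      ≤ max 1 mu * bayesExpect pr wt (welfare val B X) := by
  have hopt : ∀ θ : ∀ j, T j, lam * SW (fun i => val i (θ i)) (xopt θ)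
      ≤ ∑ i, interimUtility pr wt val B X i (θ i) + mu * bayesExpect pr wt (payment B X) := by
    intro θ
    have hsum := Finset.sum_le_sum fun i (_ : i ∈ univ) => hdev θ i
    rw [Finset.sum_sub_distrib, ← Finset.mul_sum, ← Finset.mul_sum] at hsum
    have hβ := sum_bayesExpect_betaSum_le_payment hpr0 hwt0 hB0 hX (hxoptk θ)
    simp only [SW]
    linarith [mul_le_mul_of_nonneg_left hβ hmu]
  calc _ = ∑ θ : ∀ j, T j, (∏ j, pr j (θ j)) * (lam * SW (fun i => val i (θ i)) (xopt θ)) := by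
        rw [Finset.mul_sum]; exact Finset.sum_congr rfl fun θ _ => by ring
    _ ≤ ∑ θ : ∀ j, T j, (∏ j, pr j (θ j)) *
          (∑ i, interimUtility pr wt val B X i (θ i) + mu * bayesExpect pr wt (payment B X)) :=
        Finset.sum_le_sum fun θ _ =>
          mul_le_mul_of_nonneg_left (hopt θ) (Finset.prod_nonneg fun j _ => hpr0 j _)
    _ = bayesExpect pr wt (welfare val B X) - bayesExpect pr wt (payment B X)
          + mu * bayesExpect pr wt (payment B X) := by
        rw [← sum_prod_mul_sum_interimUtility hpr1]
        simp only [mul_add, Finset.sum_add_distrib, ← Finset.sum_mul, sum_prod_eq_one hpr1, one_mul]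
    _ ≤ _ := sub_add_mul_le_max_one_mul (bayesExpect_payment_nonneg hpr0 hwt0 hB0)
        (bayesExpect_payment_le_welfare hpr0 hwt0 hval hBno hX)

end BayesianAuction

theorem stmt6_general
    (n k : ℕ)
    (lam mu : ℝ) (hlam : 0 < lam) (hmu : 0 ≤ mu)
    -- finite type spaces and the product prior
    (T : Fin n → Type) [∀ i, Fintype (T i)]
    (pr : ∀ i, T i → ℝ)
    (hpr0 : ∀ i t, 0 ≤ pr i t) (hpr1 : ∀ i, ∑ t, pr i t = 1)
    -- the (private) valuations
    (val : ∀ i, T i → ℕ → ℝ)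
    (hval : ∀ i t, IsValuation k (val i t))
    -- the bidding format: standard or uniform
    (S : Set (Bid k))
    (hS : S = {b : Bid k | StdBid b} ∨ S = {b : Bid k | UnifBid b})
    -- the allocation rule
    (X : (Fin n → Bid k) → Fin n → ℕ)
    (hX : ∀ b, ValidAlloc b (X b))
    -- a welfare-optimal allocation for each valuation profile
    (xopt : (∀ j, T j) → Fin n → ℕ)
    (hxoptk : ∀ θ, (∑ i, xopt θ i) = k)
    -- the template hypothesis: for every valuation profile, every bidder `i` and every
    -- finitely supported distribution over no-overbidding profiles from the strategy
    -- spaces, there is a no-overbidding deviation `c ∈ S` with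
    -- `E[uᵢ(c, b₋ᵢ)] ≥ λ·vᵢ(xᵢ^v) - μ·E[∑_{j=1}^{xᵢ^v} β_j(b₋ᵢ)]`
    (hT : ∀ (θ : (∀ j, T j)) (i : Fin n) (P : Type) [Fintype P] (q : P → ℝ),
      (∀ ω, 0 ≤ q ω) → (∑ ω, q ω) = 1 →
      ∀ bo : P → Fin n → Bid k,
        (∀ ω, 0 < q ω → ∀ j, j ≠ i →
          bo ω j ∈ S ∧ ∃ t : T j, NoOverbid (val j t) (bo ω j)) →
        ∃ c ∈ S, NoOverbid (val i (θ i)) c ∧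
          lam * val i (θ i) (xopt θ i)
              - mu * ∑ ω, q ω * betaSum k (othersBids (bo ω) i) (xopt θ i)
            ≤ ∑ ω, q ω * uDisc X (val i (θ i)) i (Function.update (bo ω) i c))
    -- the mixed strategies: finitely supported distributions over bid vectors in `S`
    (O : Fin n → Type) [∀ i, Fintype (O i)]
    (wt : ∀ i, T i → O i → ℝ)
    (hwt0 : ∀ i t ω, 0 ≤ wt i t ω) (hwt1 : ∀ i t, ∑ ω, wt i t ω = 1)
    (B : ∀ i, T i → O i → Bid k)
    (hBS : ∀ i t ω, 0 < wt i t ω → B i t ω ∈ S)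
    -- every bid vector in the support of every equilibrium strategy does not overbid
    (hBno : ∀ i t ω, 0 < wt i t ω → NoOverbid (val i t) (B i t ω))
    -- `B` is a (mixed) Bayes-Nash equilibrium
    (hBNE : ∀ (i : Fin n) (ti : T i), ∀ c ∈ S,
      (∑ θ : (∀ j, T j), ∑ ω : (∀ j, O j),
        ((∏ j, pr j (θ j)) * ∏ j, wt j (Function.update θ i ti j) (ω j)) *
          uDisc X (val i ti) i
            (Function.update (fun j => B j (Function.update θ i ti j) (ω j)) i c))
      ≤ ∑ θ : (∀ j, T j), ∑ ω : (∀ j, O j),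
        ((∏ j, pr j (θ j)) * ∏ j, wt j (Function.update θ i ti j) (ω j)) *
          uDisc X (val i ti) i (fun j => B j (Function.update θ i ti j) (ω j))) :
    (∑ θ : (∀ j, T j), (∏ j, pr j (θ j)) * SW (fun i => val i (θ i)) (xopt θ))
      ≤ (max 1 mu / lam) *
        ∑ θ : (∀ j, T j), ∑ ω : (∀ j, O j),
          ((∏ j, pr j (θ j)) * ∏ j, wt j (θ j) (ω j)) *
            SW (fun i => val i (θ i)) (X (fun j => B j (θ j) (ω j))) := by
  have hS0 : ∀ b ∈ S, ∀ j, 0 ≤ b j := by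
    rcases hS with rfl | rfl
    exacts [fun b hb => hb.nonneg, fun b hb => hb.nonneg]
  have hpos : ∀ (θ : ∀ j, T j) (ω : ∀ j, O j), 0 < ∏ j, wt j (θ j) (ω j) →
      ∀ i, 0 < wt i (θ i) (ω i) := fun θ ω => pos_of_prod_pos fun j => hwt0 j _ _
  have hdev : ∀ (θ : ∀ j, T j) i, lam * val i (θ i) (xopt θ i)
      - mu * bayesExpect pr wt (fun σ ω => betaSum k (othersBids (fun j => B j (σ j) (ω j)) i)
          (xopt θ i))
      ≤ interimUtility pr wt val B X i (θ i) := by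
    intro θ i
    obtain ⟨c, hcS, -, hc⟩ := hT θ i _ (interimWeight pr wt i (θ i))
      (interimWeight_nonneg hpr0 hwt0 i (θ i)) (sum_interimWeight hpr1 hwt1 i (θ i))
      (fun x j => B j (Function.update x.1 i (θ i) j) (x.2 j)) fun x hx j hj => by
        have hw := pos_of_interimWeight_pos hpr0 hwt0 hx hj
        simp only [Function.update_of_ne hj]
        exact ⟨hBS j _ _ hw, _, hBno j _ _ hw⟩
    rw [sum_interimWeight_mul_betaSum_othersBids hwt1, Fintype.sum_prod_type] at hc
    exact hc.trans (hBNE i (θ i) c hcS)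
  rw [div_mul_eq_mul_div, le_div_iff₀ hlam, mul_comm]
  exact mul_expected_optimum_le_of_interim_bound hmu hpr0 hpr1 hwt0 hval hX
    (fun θ ω h i => hS0 _ (hBS i _ _ (hpos θ ω h i)))
    (fun θ ω h i => hBno i _ _ (hpos θ ω h i)) hxoptk hdev

/-- Proof template for discriminatory pricing: if for every valuation
profile, bidder `i`, and finitely supported distribution over no-overbidding bid
profiles there is a deviation `c ∈ S` with
`E[uᵢ(c, b₋ᵢ)] ≥ λ·vᵢ(xᵢ^v) - μ·E[∑_{j ≤ xᵢ^v} β_j(b₋ᵢ)]`, then the Bayesian Price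
of Anarchy of the Discriminatory Auction is at most `max {1, μ} / λ`. -/
theorem stmt6
    (n k : ℕ) (hk : 1 ≤ k)
    (lam mu : ℝ) (hlam : 0 < lam) (hmu : 0 ≤ mu)
    -- finite type spaces and the product prior
    (T : Fin n → Type) [∀ i, Fintype (T i)]
    (pr : ∀ i, T i → ℝ)
    (hpr0 : ∀ i t, 0 ≤ pr i t) (hpr1 : ∀ i, ∑ t, pr i t = 1)
    -- the (private) valuations
    (val : ∀ i, T i → ℕ → ℝ)
    (hval : ∀ i t, IsValuation k (val i t))
    -- the bidding format: standard or uniform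
    (S : Set (Bid k))
    (hS : S = {b : Bid k | StdBid b} ∨ S = {b : Bid k | UnifBid b})
    -- the allocation rule
    (X : (Fin n → Bid k) → Fin n → ℕ)
    (hX : ∀ b, ValidAlloc b (X b))
    -- a welfare-optimal allocation for each valuation profile
    (xopt : (∀ j, T j) → Fin n → ℕ)
    (hxoptk : ∀ θ, (∑ i, xopt θ i) = k)
    (hxoptmax : ∀ θ (y : Fin n → ℕ), (∑ i, y i) = k →
      SW (fun i => val i (θ i)) y ≤ SW (fun i => val i (θ i)) (xopt θ))
    -- the template hypothesis: for every valuation profile, every bidder `i` and every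
    -- finitely supported distribution over no-overbidding profiles from the strategy
    -- spaces, there is a no-overbidding deviation `c ∈ S` with
    -- `E[uᵢ(c, b₋ᵢ)] ≥ λ·vᵢ(xᵢ^v) - μ·E[∑_{j=1}^{xᵢ^v} β_j(b₋ᵢ)]`
    (hT : ∀ (θ : (∀ j, T j)) (i : Fin n) (P : Type) [Fintype P] (q : P → ℝ),
      (∀ ω, 0 ≤ q ω) → (∑ ω, q ω) = 1 →
      ∀ bo : P → Fin n → Bid k,
        (∀ ω, 0 < q ω → ∀ j, j ≠ i →
          bo ω j ∈ S ∧ ∃ t : T j, NoOverbid (val j t) (bo ω j)) →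
        ∃ c ∈ S, NoOverbid (val i (θ i)) c ∧
          lam * val i (θ i) (xopt θ i)
              - mu * ∑ ω, q ω * betaSum k (othersBids (bo ω) i) (xopt θ i)
            ≤ ∑ ω, q ω * uDisc X (val i (θ i)) i (Function.update (bo ω) i c))
    -- the mixed strategies: finitely supported distributions over bid vectors in `S`
    (O : Fin n → Type) [∀ i, Fintype (O i)]
    (wt : ∀ i, T i → O i → ℝ)
    (hwt0 : ∀ i t ω, 0 ≤ wt i t ω) (hwt1 : ∀ i t, ∑ ω, wt i t ω = 1)
    (B : ∀ i, T i → O i → Bid k)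
    (hBS : ∀ i t ω, 0 < wt i t ω → B i t ω ∈ S)
    -- every bid vector in the support of every equilibrium strategy does not overbid
    (hBno : ∀ i t ω, 0 < wt i t ω → NoOverbid (val i t) (B i t ω))
    -- `B` is a (mixed) Bayes-Nash equilibrium
    (hBNE : ∀ (i : Fin n) (ti : T i), ∀ c ∈ S,
      (∑ θ : (∀ j, T j), ∑ ω : (∀ j, O j),
        ((∏ j, pr j (θ j)) * ∏ j, wt j (Function.update θ i ti j) (ω j)) *
          uDisc X (val i ti) i
            (Function.update (fun j => B j (Function.update θ i ti j) (ω j)) i c))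
      ≤ ∑ θ : (∀ j, T j), ∑ ω : (∀ j, O j),
        ((∏ j, pr j (θ j)) * ∏ j, wt j (Function.update θ i ti j) (ω j)) *
          uDisc X (val i ti) i (fun j => B j (Function.update θ i ti j) (ω j))) :
    (∑ θ : (∀ j, T j), (∏ j, pr j (θ j)) * SW (fun i => val i (θ i)) (xopt θ))
      ≤ (max 1 mu / lam) *
        ∑ θ : (∀ j, T j), ∑ ω : (∀ j, O j),
          ((∏ j, pr j (θ j)) * ∏ j, wt j (θ j) (ω j)) *
            SW (fun i => val i (θ i)) (X (fun j => B j (θ j) (ω j))) :=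
  stmt6_general n k lam mu hlam hmu T pr hpr0 hpr1 val hval S hS X hX xopt hxoptk hT O wt hwt0 hwt1
    B hBS hBno hBNE

end
end

section
/- If v : {0,…,k} → ℝ is non-negative, non-decreasing, subadditive with v(0) = 0, and 1 ≤ x ≤ k, then min over j ∈ {1,…,x} of v(j)/j is at least v(x)/(2x); equivalently, if τ ∈ {1,…,x} minimizes v(j)/j over j ∈ {1,…,x}, then v(τ)/τ ≥ (1/2)·v(x)/x. -/
open Finset MeasureTheory

noncomputable section

lemma stmt9_aux (k : ℕ) (v : ℕ → ℝ) (hv : IsValuation k v) (hsa : SubadditiveVal k v)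
    (τ : ℕ) (hτ1 : 1 ≤ τ) (hτk : τ ≤ k) :
    ∀ q x : ℕ, x ≤ q * τ → x ≤ k → v x ≤ (q : ℝ) * v τ := by
  obtain ⟨h0, hnn, hmono⟩ := hv
  intro q
  induction q with
  | zero => intro x hx _; simp at hx; simp [hx, h0]
  | succ q ih =>
    intro x hx hxk
    by_cases hle : x ≤ q * τ
    · calc v x ≤ (q : ℝ) * v τ := ih x hle hxk
        _ ≤ ((q : ℝ) + 1) * v τ := by nlinarith [hnn τ]
        _ = ((q + 1 : ℕ) : ℝ) * v τ := by push_cast; ring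
    · push_neg at hle
      by_cases hxτ : x ≤ τ
      · have := hmono x τ hxτ hτk
        have : v x ≤ v τ := this
        have h1 : (1 : ℝ) ≤ ((q + 1 : ℕ) : ℝ) := by exact_mod_cast Nat.succ_le_succ (Nat.zero_le q)
        nlinarith [hnn τ]
      · push_neg at hxτ
        have hτx : τ ≤ x := le_of_lt hxτ
        have hsub : x - τ + τ = x := Nat.sub_add_cancel hτx
        have hx' : x ≤ q * τ + τ := by rwa [Nat.succ_mul] at hx
        have hsa' : v (x - τ + τ) ≤ v (x - τ) + v τ := hsa (x - τ) τ (by omega)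
        have hih : v (x - τ) ≤ (q : ℝ) * v τ := ih (x - τ) (by omega) (by omega)
        rw [hsub] at hsa'
        push_cast
        nlinarith

/-- For a subadditive valuation `v` on `{0,…,k}` and `1 ≤ x ≤ k`,
the minimum of `v j / j` over `j ∈ {1,…,x}` is at least `(1/2) ⬝ v x / x`. -/
theorem stmt9 (k : ℕ) (v : ℕ → ℝ) (hv : IsValuation k v) (hsa : SubadditiveVal k v)
    (x : ℕ) (hx1 : 1 ≤ x) (hxk : x ≤ k)
    (τ : ℕ) (hτmem : τ ∈ Finset.Icc 1 x)
    (hτmin : ∀ j ∈ Finset.Icc 1 x, v τ / (τ : ℝ) ≤ v j / (j : ℝ)) :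
    (1 / 2) * (v x / (x : ℝ)) ≤ v τ / (τ : ℝ) := by
  simp only [Finset.mem_Icc] at hτmem
  obtain ⟨hτ1, hτx⟩ := hτmem
  have hτk : τ ≤ k := le_trans hτx hxk
  set q := (x + τ - 1) / τ with hq
  have hr := Nat.mod_lt (x + τ - 1) (show 0 < τ by omega)
  have hdm := Nat.div_add_mod (x + τ - 1) τ
  have hxq : x ≤ q * τ := by rw [hq, Nat.mul_comm]; omega
  have hqx : q * τ ≤ 2 * x - 1 := by rw [hq, Nat.mul_comm]; omega
  have hvx : v x ≤ (q : ℝ) * v τ := stmt9_aux k v hv hsa τ hτ1 hτk q x hxq hxk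
  obtain ⟨h0, hnn, hmono⟩ := hv
  have hτpos : (0 : ℝ) < τ := by exact_mod_cast hτ1
  have hxpos : (0 : ℝ) < x := by exact_mod_cast hx1
  have hqr : (q : ℝ) * τ ≤ 2 * x - 1 := by
    have : ((q * τ : ℕ) : ℝ) ≤ ((2 * x - 1 : ℕ) : ℝ) := by exact_mod_cast hqx
    push_cast [Nat.cast_sub (by omega : 1 ≤ 2 * x)] at this
    linarith
  have key : v x * τ ≤ v τ * (2 * x) := by nlinarith [hnn τ, hnn x]
  have heq : (1 / 2) * (v x / (x : ℝ)) = v x / (2 * x) := by ring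
  rw [heq, div_le_div_iff₀ (by positivity) hτpos]
  linarith

end
end

section
/- Lower bound construction for the proof template under uniform pricing: consider k = 1 unit and 2 bidders with valuations v_1(1) = 1 and v_2(1) = 1/2, bids b_1 = b_2 = 1/2, and ties resolved in favor of bidder 2 (so bidder 2 wins the unit and pays the losing bid 1/2, hence β_1(b) = 1/2 and the optimal welfare is SW(v, x^v) = 1). Then for every deviation bid b'_1 ≥ 0 of bidder 1, u_1^{v_1}(b'_1, b_2) ≤ 1/2, and for every no-overbidding deviation b'_2 ∈ [0, 1/2] of bidder 2, u_2^{v_2}(b'_2, b_1) ≤ 0; consequently, for every μ ≥ 0 and every λ > (1+μ)/2, u_1^{v_1}(b'_1, b_2) + u_2^{v_2}(b'_2, b_1) < λ·SW(v, x^v) − μ·β_1(b). In particular, no upper bound better than 2 on the Price of Anarchy of the Uniform Price Auction can be derived through the smoothness-type proof template. -/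
open Finset MeasureTheory

noncomputable section

/-! In a one-unit auction between two bidders the winner pays the losing bid. Against the
opponent's bid `1/2`, bidder `1` therefore gets at most `1 - 1/2` and bidder `2` at most
`1/2 - 1/2 = 0`, whatever they bid, so the two deviation utilities sum to at most
`1/2 < λ - μ/2 = λ·SW - μ·β₁(b)`. -/

theorem Multiset.sort_pair_of_le {α : Type*} [LinearOrder α] {x y : α} (h : x ≤ y) :
    ({x, y} : Multiset α).sort (· ≤ ·) = [x, y] := by
  simp [Multiset.insert_eq_cons, Multiset.sort_cons, h]

theorem kthHighest_pair_one (x y : ℝ) : kthHighest {x, y} 1 = max x y := by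
  rcases le_total x y with h | h
  · rw [kthHighest, Multiset.sort_pair_of_le h]; simp [h]
  · rw [kthHighest, Multiset.pair_comm, Multiset.sort_pair_of_le h]; simp [h]

theorem kthHighest_pair_two (x y : ℝ) : kthHighest {x, y} 2 = min x y := by
  rcases le_total x y with h | h
  · rw [kthHighest, Multiset.sort_pair_of_le h]; simp [h]
  · rw [kthHighest, Multiset.pair_comm, Multiset.sort_pair_of_le h]; simp [h]

theorem allBids_fin_two_fin_one (c : Fin 2 → Bid 1) : allBids c = {c 0 0, c 1 0} := rfl

theorem price_fin_two_fin_one (c : Fin 2 → Bid 1) : price c = min (c 0 0) (c 1 0) :=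
  kthHighest_pair_two _ _

theorem ValidAlloc.apply_le {n k : ℕ} {c : Fin n → Bid k} {x : Fin n → ℕ}
    (hx : ValidAlloc c x) (i : Fin n) : x i ≤ k :=
  hx.1 ▸ Finset.single_le_sum (fun _ _ => Nat.zero_le _) (Finset.mem_univ i)

theorem uUnif_le_max_of_validAlloc {X : (Fin 2 → Bid 1) → Fin 2 → ℕ} {c : Fin 2 → Bid 1}
    (hX : ValidAlloc c (X c)) (v : ℕ → ℝ) {i j : Fin 2} (hij : i ≠ j) :
    uUnif X v i c ≤ max (v 0) (v 1 - c j 0) := by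
  have hsum : X c i + X c j = 1 := by
    have := hX.1; fin_cases i <;> fin_cases j <;> simp_all [Fin.sum_univ_two, add_comm]
  rcases Nat.le_one_iff_eq_zero_or_eq_one.mp (hX.apply_le i) with hi | hi
  · simp [uUnif, hi]
  · have hlose : c j 0 ≤ c i 0 := hX.2 i j 0 0 (by simp [hi]) (by simp; omega)
    have hprice : price c = c j 0 := by
      rw [price_fin_two_fin_one]
      fin_cases i <;> fin_cases j <;> simp_all
    simp [uUnif, hi, hprice]

theorem stmt14_general
    -- the allocation rule; ties are broken in favor of bidder `2` (index `1`)
    (X : (Fin 2 → Bid 1) → Fin 2 → ℕ)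
    (hX : ∀ b, ValidAlloc b (X b))
    -- the valuations
    (v : Fin 2 → ℕ → ℝ)
    (hv : v = fun (i : Fin 2) (x : ℕ) =>
      if x = 0 then 0 else if i.val = 0 then 1 else 1 / 2)
    -- both bidders bid `1/2`
    (b : Fin 2 → Bid 1)
    (hb : b = fun _ _ => 1 / 2) :
    -- `β₁(b) = 1/2`
    betaBid 1 (allBids b) 1 = 1 / 2 ∧
    -- the optimal social welfare equals `1`
    (∀ y : Fin 2 → ℕ, (∑ i, y i) = 1 → SW v y ≤ 1) ∧
    SW v (fun i : Fin 2 => if i.val = 0 then 1 else 0) = 1 ∧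
    -- every deviation of bidder `1` gives utility at most `1/2`
    (∀ b1' : Bid 1, (∀ j, 0 ≤ b1' j) →
      uUnif X (v 0) 0 (Function.update b 0 b1') ≤ 1 / 2) ∧
    -- every no-overbidding deviation of bidder `2` gives utility at most `0`
    (∀ b2' : Bid 1, (∀ j, 0 ≤ b2' j ∧ b2' j ≤ 1 / 2) →
      uUnif X (v 1) 1 (Function.update b 1 b2') ≤ 0) ∧
    -- consequently, for every `μ ≥ 0` and `λ > (1+μ)/2` the smoothness
    -- inequality fails
    (∀ mu lam : ℝ, 0 ≤ mu → (1 + mu) / 2 < lam →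
      ∀ b1' b2' : Bid 1, (∀ j, 0 ≤ b1' j) → (∀ j, 0 ≤ b2' j ∧ b2' j ≤ 1 / 2) →
        uUnif X (v 0) 0 (Function.update b 0 b1') +
            uUnif X (v 1) 1 (Function.update b 1 b2')
          < lam * 1 - mu * betaBid 1 (allBids b) 1) := by
  subst hv hb
  have hbeta : betaBid 1 (allBids fun (_ : Fin 2) (_ : Fin 1) => (1 / 2 : ℝ)) 1 = 1 / 2 :=
    (kthHighest_pair_one _ _).trans (max_self _)
  have hdev1 : ∀ b1' : Bid 1, uUnif X (fun x => if x = 0 then 0 else 1) 0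
      (Function.update (fun _ _ => 1 / 2) 0 b1') ≤ 1 / 2 :=
    fun b1' => (uUnif_le_max_of_validAlloc (hX _) _ (by decide : (0 : Fin 2) ≠ 1)).trans (by norm_num)
  have hdev2 : ∀ b2' : Bid 1, uUnif X (fun x => if x = 0 then 0 else 1 / 2) 1
      (Function.update (fun _ _ => 1 / 2) 1 b2') ≤ 0 :=
    fun b2' => (uUnif_le_max_of_validAlloc (hX _) _ (by decide : (1 : Fin 2) ≠ 0)).trans (by norm_num)
  refine ⟨hbeta, fun y hy => ?_, by norm_num [SW], fun b1' _ => hdev1 b1', fun b2' _ => hdev2 b2',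
    fun mu lam _ hlam b1' b2' _ _ => ?_⟩
  · have hwinner : y 0 = 0 ∧ y 1 = 1 ∨ y 0 = 1 ∧ y 1 = 0 := by
      simp only [Fin.sum_univ_two] at hy; omega
    rcases hwinner with ⟨h0, h1⟩ | ⟨h0, h1⟩ <;> norm_num [SW, h0, h1]
  · calc _ ≤ (1 / 2 : ℝ) + 0 := add_le_add (hdev1 b1') (hdev2 b2')
      _ < _ := by rw [hbeta]; linarith

/-- Lower bound construction for the proof template under uniform
pricing: one unit, two bidders, `v₁(1) = 1`, `v₂(1) = 1/2`, bids `b₁ = b₂ = 1/2`,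
ties resolved in favor of bidder `2`. Then `β₁(b) = 1/2`, the optimal welfare is `1`,
every deviation of bidder `1` yields utility at most `1/2`, every no-overbidding
deviation of bidder `2` yields utility at most `0`, and hence for all `μ ≥ 0` and
`λ > (1+μ)/2` the smoothness inequality `u₁ + u₂ < λ·SW(v,x^v) - μ·β₁(b)` fails to
be satisfiable. -/
theorem stmt14
    -- the allocation rule; ties are broken in favor of bidder `2` (index `1`)
    (X : (Fin 2 → Bid 1) → Fin 2 → ℕ)
    (hX : ∀ b, ValidAlloc b (X b))
    (hfav : ∀ b y, ValidAlloc b y → y 1 ≤ X b 1)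
    -- the valuations
    (v : Fin 2 → ℕ → ℝ)
    (hv : v = fun (i : Fin 2) (x : ℕ) =>
      if x = 0 then 0 else if i.val = 0 then 1 else 1 / 2)
    -- both bidders bid `1/2`
    (b : Fin 2 → Bid 1)
    (hb : b = fun _ _ => 1 / 2) :
    -- `β₁(b) = 1/2`
    betaBid 1 (allBids b) 1 = 1 / 2 ∧
    -- the optimal social welfare equals `1`
    (∀ y : Fin 2 → ℕ, (∑ i, y i) = 1 → SW v y ≤ 1) ∧
    SW v (fun i : Fin 2 => if i.val = 0 then 1 else 0) = 1 ∧
    -- every deviation of bidder `1` gives utility at most `1/2`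
    (∀ b1' : Bid 1, (∀ j, 0 ≤ b1' j) →
      uUnif X (v 0) 0 (Function.update b 0 b1') ≤ 1 / 2) ∧
    -- every no-overbidding deviation of bidder `2` gives utility at most `0`
    (∀ b2' : Bid 1, (∀ j, 0 ≤ b2' j ∧ b2' j ≤ 1 / 2) →
      uUnif X (v 1) 1 (Function.update b 1 b2') ≤ 0) ∧
    -- consequently, for every `μ ≥ 0` and `λ > (1+μ)/2` the smoothness
    -- inequality fails
    (∀ mu lam : ℝ, 0 ≤ mu → (1 + mu) / 2 < lam →
      ∀ b1' b2' : Bid 1, (∀ j, 0 ≤ b1' j) → (∀ j, 0 ≤ b2' j ∧ b2' j ≤ 1 / 2) →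
        uUnif X (v 0) 0 (Function.update b 0 b1') +
            uUnif X (v 1) 1 (Function.update b 1 b2')
          < lam * 1 - mu * betaBid 1 (allBids b) 1) :=
  stmt14_general X hX v hv b hb

end
end

section
/- Pure Nash equilibria of the Discriminatory Auction are efficient: let v = (v_1,…,v_n) be arbitrary valuations (non-negative, non-decreasing, v_i(0) = 0), with n ≥ 2 bidders and k units, and let b be a bidding profile that is a pure Nash equilibrium under discriminatory pricing, i.e., no bidder i can strictly increase u_i^{v_i} by unilaterally deviating to any non-increasing non-negative bid vector b'_i (for any allocation consistent with the allocation rule after the deviation). Then the equilibrium allocation is welfare-optimal: SW(v, x(b)) = SW(v, x^v). -/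
open Finset MeasureTheory

noncomputable section

/-!
Let `W` be the lowest winning bid, so that no losing bid exceeds `W`. A bidder who bids `c > W` on
`s` units wins at least `s` units whenever the other bidders hold at most `k - s` bids above `W`.
With `s = x i` this is the case, so at equilibrium bidder `i` pays at most `x i * W` for `x i`
bids that are all at least `W`: every winning bid equals `W`. Then no bid exceeds `W`, every bidder
can secure any quantity `s` at unit price `W`, and `v i s - s * W` is at most the equilibrium
utility of `i`. Summing over an optimal allocation gives `SW v xopt - k * W ≤ SW v x - k * W`.
-/

section
variable {n k : ℕ}

lemma apply_le_of_sum_eq {x : Fin n → ℕ} (hx : ∑ i, x i = k) (i : Fin n) : x i ≤ k :=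
  hx ▸ single_le_sum (fun _ _ => Nat.zero_le _) (mem_univ i)

lemma winSum_eq_sum_filter (b : Bid k) (x : ℕ) :
    winSum b x = ∑ j ∈ {j : Fin k | (j : ℕ) < x}, b j :=
  (sum_filter _ _).symm

lemma mul_le_winSum {b : Bid k} {x : ℕ} {W : ℝ} (hxk : x ≤ k)
    (h : ∀ j : Fin k, (j : ℕ) < x → W ≤ b j) : x * W ≤ winSum b x := by
  have := card_nsmul_le_sum {j : Fin k | (j : ℕ) < x} b W (by simpa using h)
  rwa [Fin.card_filter_val_lt, min_eq_right hxk, nsmul_eq_mul, ← winSum_eq_sum_filter] at this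

lemma eq_of_winSum_le_mul {b : Bid k} {x : ℕ} {W : ℝ} (hxk : x ≤ k)
    (h : ∀ j : Fin k, (j : ℕ) < x → W ≤ b j) (hle : winSum b x ≤ x * W)
    (j : Fin k) (hj : (j : ℕ) < x) : b j = W := by
  have hsum : ∑ j ∈ {j : Fin k | (j : ℕ) < x}, (b j - W) = winSum b x - x * W := by
    rw [sum_sub_distrib, sum_const, Fin.card_filter_val_lt, min_eq_right hxk, nsmul_eq_mul,
      winSum_eq_sum_filter]
  have hzero := (sum_eq_zero_iff_of_nonneg (s := {j : Fin k | (j : ℕ) < x})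
    (f := fun j => b j - W) (by simpa using h)).mp
    (le_antisymm (by linarith) (sum_nonneg (by simpa using h)))
  linarith [hzero j (by simpa using hj)]

def flatBid (k : ℕ) (c : ℝ) (s : ℕ) : Bid k := fun j => if (j : ℕ) < s then c else 0

lemma stdBid_flatBid {c : ℝ} (hc : 0 ≤ c) (s : ℕ) : StdBid (flatBid k c s) := by
  refine ⟨fun j j' hjj' => ?_, fun j => ?_⟩ <;> unfold flatBid <;> split_ifs <;> grind

lemma winSum_flatBid (c : ℝ) {s y : ℕ} (hsk : s ≤ k) (hsy : s ≤ y) :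
    winSum (flatBid k c s) y = s * c := by
  have : winSum (flatBid k c s) y = winSum (fun _ : Fin k => c) s := by
    unfold winSum flatBid
    refine sum_congr rfl fun j _ => ?_
    split_ifs <;> first | rfl | omega
  rw [this, winSum_eq_sum_filter, sum_const, Fin.card_filter_val_lt, min_eq_right hsk,
    nsmul_eq_mul]

/-- Greedy construction: award the units one at a time, each to a highest not yet winning bid. -/
lemma exists_separating_alloc {b : Fin n → Bid k} (hn : 0 < n) (hb : ∀ i, Antitone (b i)) :
    ∀ m ≤ k, ∃ x : Fin n → ℕ, ∑ i, x i = m ∧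
      ∀ i i' : Fin n, ∀ j j' : Fin k, (j : ℕ) < x i → x i' ≤ (j' : ℕ) → b i' j' ≤ b i j := by
  intro m
  induction m with
  | zero => exact fun _ => ⟨0, by simp, fun _ _ _ _ h => absurd h (Nat.not_lt_zero _)⟩
  | succ m ih =>
    intro hm
    obtain ⟨x, hsum, hsep⟩ := ih (by omega)
    have hlosing : ({p : Fin n × Fin k | x p.1 ≤ p.2} : Finset _).Nonempty := by
      have := apply_le_of_sum_eq hsum ⟨0, hn⟩
      exact ⟨(⟨0, hn⟩, ⟨x ⟨0, hn⟩, by omega⟩), by simp⟩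
    obtain ⟨⟨i, j⟩, hij, hmax⟩ := exists_max_image _ (fun p => b p.1 p.2) hlosing
    simp only [mem_filter, mem_univ, true_and] at hij hmax
    refine ⟨x + Pi.single i 1, by simp [sum_add_distrib, hsum], ?_⟩
    intro i₁ i₂ j₁ j₂ hj₁ hj₂
    simp only [Pi.add_apply, Pi.single_apply] at hj₁ hj₂
    have hlose : b i₂ j₂ ≤ b i j := hmax (i₂, j₂) (by split_ifs at hj₂ <;> simp <;> omega)
    by_cases hold : (j₁ : ℕ) < x i₁
    · exact hsep i₁ i₂ j₁ j₂ hold (by split_ifs at hj₂ <;> omega)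
    · have hi : i₁ = i := by by_contra h; simp [h] at hj₁; omega
      subst hi
      simp only [if_true] at hj₁
      exact hlose.trans (hb i₁ (show j₁ ≤ j by rw [Fin.le_iff_val_le_val]; omega))

lemma exists_validAlloc {b : Fin n → Bid k} (hn : 0 < n) (hb : ∀ i, Antitone (b i)) :
    ∃ x, ValidAlloc b x :=
  exists_separating_alloc hn hb k le_rfl

lemma exists_min_winning_bid (hk : 1 ≤ k) (b : Fin n → Bid k) {x : Fin n → ℕ}
    (hx : ∑ i, x i = k) :
    ∃ (i₀ : Fin n) (j₀ : Fin k), (j₀ : ℕ) < x i₀ ∧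
      ∀ i (j : Fin k), (j : ℕ) < x i → b i₀ j₀ ≤ b i j := by
  obtain ⟨i, -, hi⟩ := exists_ne_zero_of_sum_ne_zero (s := univ) (f := x) (by omega)
  obtain ⟨⟨i₀, j₀⟩, hwin, hmin⟩ :=
    exists_min_image ({p : Fin n × Fin k | p.2 < x p.1} : Finset _) (fun p => b p.1 p.2)
      ⟨(i, ⟨0, hk⟩), by simp; omega⟩
  exact ⟨i₀, j₀, by simpa using hwin, fun i j hj => hmin (i, j) (by simpa using hj)⟩

lemma le_of_validAlloc_update_flatBid {b : Fin n → Bid k} {i : Fin n} {c : ℝ} {s : ℕ}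
    {y : Fin n → ℕ} (hy : ValidAlloc (Function.update b i (flatBid k c s)) y)
    (z : Fin n → ℕ) (hz : ∀ i' ≠ i, ∀ j : Fin k, c ≤ b i' j → (j : ℕ) < z i')
    (hzs : s + ∑ i' ∈ univ.erase i, z i' ≤ k) : s ≤ y i := by
  by_contra! hys
  have hyz : ∀ i' ∈ univ.erase i, y i' ≤ z i' := by
    intro i' hi'
    have hi' : i' ≠ i := ne_of_mem_erase hi'
    by_contra! hzy
    have hyk := apply_le_of_sum_eq hy.1 i'
    have h := hy.2 i' i ⟨z i', by omega⟩ ⟨y i, by omega⟩ hzy le_rfl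
    simp only [Function.update_self, Function.update_of_ne hi', flatBid, hys, if_true] at h
    exact absurd (hz i' hi' _ h) (lt_irrefl _)
  have := sum_le_sum hyz
  have := add_sum_erase univ y (mem_univ i)
  have := hy.1
  omega

lemma sub_mul_le_of_flatBid_deviations {b : Fin n → Bid k} (hn : 0 < n)
    (hb : ∀ i, StdBid (b i)) {i : Fin n} {w : ℕ → ℝ}
    (hw : ∀ a a' : ℕ, a ≤ a' → a' ≤ k → w a ≤ w a') {U : ℝ}
    (hNE : ∀ b' : Bid k, StdBid b' → ∀ y : Fin n → ℕ,
      ValidAlloc (Function.update b i b') y → w (y i) - winSum b' (y i) ≤ U)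
    {W : ℝ} (hW : 0 ≤ W) (s : ℕ) (z : Fin n → ℕ)
    (hz : ∀ i' ≠ i, ∀ j : Fin k, W < b i' j → (j : ℕ) < z i')
    (hzs : s + ∑ i' ∈ univ.erase i, z i' ≤ k) : w s - s * W ≤ U := by
  have hlim : Filter.Tendsto (fun c : ℝ => w s - s * c) (nhdsWithin W (Set.Ioi W))
      (nhds (w s - s * W)) :=
    ((continuous_const.sub (continuous_const.mul continuous_id)).tendsto W).mono_left
      nhdsWithin_le_nhds
  refine le_of_tendsto hlim (eventually_nhdsWithin_of_forall fun c (hc : W < c) => ?_)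
  have hstd : ∀ i', StdBid (Function.update b i (flatBid k c s) i') :=
    Function.forall_update_iff b (p := fun _ b' => StdBid b') |>.mpr
      ⟨stdBid_flatBid (hW.trans hc.le) s, fun i' _ => hb i'⟩
  obtain ⟨y, hy⟩ := exists_validAlloc hn fun i' => (hstd i').1
  have hsy := le_of_validAlloc_update_flatBid hy z
    (fun i' hi' j hj => hz i' hi' j (hc.trans_le hj)) hzs
  have hdev := hNE _ (stdBid_flatBid (hW.trans hc.le) s) y hy
  rw [winSum_flatBid c (by omega) hsy] at hdev
  linarith [hw s (y i) hsy (apply_le_of_sum_eq hy.1 i)]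

end

theorem stmt17_general (n k : ℕ) (hk : 1 ≤ k)
    -- arbitrary valuations
    (v : Fin n → ℕ → ℝ) (hv : ∀ i, IsValuation k (v i))
    -- the equilibrium bidding profile and its allocation
    (b : Fin n → Bid k) (hb : ∀ i, StdBid (b i))
    (x : Fin n → ℕ) (hx : ValidAlloc b x)
    -- `b` is a pure Nash equilibrium
    (hNE : ∀ (i : Fin n) (b' : Bid k), StdBid b' →
      ∀ y : Fin n → ℕ, ValidAlloc (Function.update b i b') y →
        v i (y i) - winSum b' (y i) ≤ v i (x i) - winSum (b i) (x i))
    -- a welfare-optimal allocation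
    (xopt : Fin n → ℕ) (hxoptk : (∑ i, xopt i) = k)
    (hxoptmax : ∀ y : Fin n → ℕ, (∑ i, y i) = k → SW v y ≤ SW v xopt) :
    SW v x = SW v xopt := by
  obtain ⟨i₀, j₀, hj₀, hmin⟩ := exists_min_winning_bid hk b hx.1
  set W := b i₀ j₀
  have hdev := fun i =>
    sub_mul_le_of_flatBid_deviations i₀.pos hb (hv i).2.2 (hNE i) ((hb i₀).2 j₀)
  have hlose : ∀ i (j : Fin k), x i ≤ j → b i j ≤ W := fun i j => hx.2 i₀ i j₀ j hj₀
  have hpay_le : ∀ i, winSum (b i) (x i) ≤ x i * W := fun i => by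
    have := hdev i (x i) x (fun i' _ j hj => by by_contra! h; linarith [hlose i' j h])
      ((add_sum_erase univ x (mem_univ i)).trans hx.1).le
    linarith
  have hbW : ∀ i j, b i j ≤ W := fun i j => by
    by_cases hj : (j : ℕ) < x i
    · exact (eq_of_winSum_le_mul (apply_le_of_sum_eq hx.1 i) (hmin i) (hpay_le i) j hj).le
    · exact hlose i j (not_lt.mp hj)
  have hopt : ∀ i, v i (xopt i) - xopt i * W ≤ v i (x i) - x i * W := fun i => by
    have := hdev i (xopt i) 0 (fun i' _ j hj => absurd (hbW i' j) (not_le.mpr hj))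
      (by simpa using apply_le_of_sum_eq hxoptk i)
    linarith [mul_le_winSum (apply_le_of_sum_eq hx.1 i) (hmin i)]
  have hsum : ∀ y : Fin n → ℕ, ∑ i, y i = k → ∑ i, (v i (y i) - y i * W) = SW v y - k * W :=
    fun y hy => by rw [sum_sub_distrib, ← sum_mul, ← Nat.cast_sum, hy, SW]
  have := sum_le_sum fun i (_ : i ∈ univ) => hopt i
  rw [hsum xopt hxoptk, hsum x hx.1] at this
  linarith [hxoptmax x hx.1]

/-- Pure Nash equilibria of the Discriminatory Auction are
efficient: for arbitrary valuations, `n ≥ 2` bidders and `k` units, if no bidder can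
strictly increase his discriminatory-pricing utility by unilaterally deviating to any
non-increasing non-negative bid vector (under any allocation consistent with the
allocation rule after the deviation), then the equilibrium allocation is
welfare-optimal. -/
theorem stmt17 (n k : ℕ) (hk : 1 ≤ k) (hn : 2 ≤ n)
    -- arbitrary valuations
    (v : Fin n → ℕ → ℝ) (hv : ∀ i, IsValuation k (v i))
    -- the equilibrium bidding profile and its allocation
    (b : Fin n → Bid k) (hb : ∀ i, StdBid (b i))
    (x : Fin n → ℕ) (hx : ValidAlloc b x)
    -- `b` is a pure Nash equilibrium
    (hNE : ∀ (i : Fin n) (b' : Bid k), StdBid b' →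
      ∀ y : Fin n → ℕ, ValidAlloc (Function.update b i b') y →
        v i (y i) - winSum b' (y i) ≤ v i (x i) - winSum (b i) (x i))
    -- a welfare-optimal allocation
    (xopt : Fin n → ℕ) (hxoptk : (∑ i, xopt i) = k)
    (hxoptmax : ∀ y : Fin n → ℕ, (∑ i, y i) = k → SW v y ≤ SW v xopt) :
    SW v x = SW v xopt :=
  stmt17_general n k hk v hv b hb x hx hNE xopt hxoptk hxoptmax

end
end
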